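/- Let N ≥ 7, J ≥ 1, and F(σ) = |σ|^{4/(N−2)}σ. There is a constant C = C(N,J) such that for all reals y₁,…,y_J, h: |F(h + Σⱼyⱼ) − ΣⱼF(yⱼ) − ((N+2)/(N−2))Σⱼ|yⱼ|^{4/(N−2)}h − F(h)| ≤ C(Σ_{j<k} min(|yⱼ|^{4/(N−2)}|y_k|, |y_k|^{4/(N−2)}|yⱼ|) + |h|^{(N+1)/(N−2)} Σⱼ|yⱼ|^{1/(N−2)}). -/

import Mathlib

/-!
Write `q = 4/(N-2)`, `r = 1/(N-2)` and `G(s) = |s|^q s`. The derivative `G'(s) = (1+q)|s|^q` is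
`q`-Hölder, so `G(u) - G(v) - G'(v)(u-v) = O(|u-v|^{1+q})`.

If `|h|` dominates every `|y_j|`, expand `G` around `h`: every error term is one of
`|h|^q |y_j|`, `|y_j|^{1+q}`, `|y_j|^q |h|`, and each of these is at most `|h|^{1+q-r} |y_j|^r`.
Otherwise expand around the `y_{j₀}` of largest modulus. The linear term `(1+q)|y_{j₀}|^q h` then
cancels exactly, and what is left is controlled either by `|y_{j₀}|^q |y_j|`, which for `q ≤ 1` is
the pair interaction `min(|y_{j₀}|^q |y_j|, |y_j|^q |y_{j₀}|)`, or by `|h|^{1+q-r} |y_j|^r`.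
-/

open Real Finset

/-- The energy-critical nonlinearity `F(σ) = |σ|^{4/(N-2)} σ`. -/
noncomputable def F (N : ℕ) (s : ℝ) : ℝ := |s| ^ ((4 : ℝ) / ((N : ℝ) - 2)) * s

lemma rpow_mul_rpow_le_rpow_mul_rpow {Z H a b c d : ℝ} (hZ : 0 ≤ Z) (hZH : Z ≤ H) (hc : 0 ≤ c)
    (hca : c ≤ a) (hb : 0 ≤ b) (hsum : a + b = c + d) : Z ^ a * H ^ b ≤ Z ^ c * H ^ d := by
  have hac : 0 ≤ a - c := sub_nonneg.2 hca
  have hH : 0 ≤ H := hZ.trans hZH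
  calc Z ^ a * H ^ b = Z ^ c * (Z ^ (a - c) * H ^ b) := by
        rw [← mul_assoc, ← rpow_add_of_nonneg hZ hc hac, add_sub_cancel]
    _ ≤ Z ^ c * (H ^ (a - c) * H ^ b) := by gcongr
    _ = Z ^ c * H ^ d := by
        rw [← rpow_add_of_nonneg hH hac hb]
        congr 2
        linarith

lemma rpow_mul_le_rpow_mul {q a b : ℝ} (ha : 0 ≤ a) (hab : a ≤ b) (hq0 : 0 ≤ q) (hq1 : q ≤ 1) :
    b ^ q * a ≤ a ^ q * b := by
  have := rpow_mul_rpow_le_rpow_mul_rpow ha hab hq0 hq1 hq0 (d := 1) (add_comm _ _)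
  rwa [rpow_one, rpow_one, mul_comm] at this

lemma min_rpow_mul_rpow_mul_of_le {q a b : ℝ} (ha : 0 ≤ a) (hab : a ≤ b) (hq0 : 0 ≤ q)
    (hq1 : q ≤ 1) : min (b ^ q * a) (a ^ q * b) = b ^ q * a :=
  min_eq_left (rpow_mul_le_rpow_mul ha hab hq0 hq1)

section ShiftToLarger

variable {q r a b : ℝ}

lemma rpow_mul_le_rpow_one_add_sub_mul_rpow (ha : 0 ≤ a) (hab : a ≤ b) (hq : 0 ≤ q)
    (hr0 : 0 ≤ r) (hr1 : r ≤ 1) : b ^ q * a ≤ b ^ (1 + q - r) * a ^ r := by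
  have := rpow_mul_rpow_le_rpow_mul_rpow ha hab hr0 hr1 hq (d := 1 + q - r) (by ring)
  rwa [rpow_one, mul_comm, mul_comm (a ^ r)] at this

lemma rpow_mul_le_rpow_one_add_sub_mul_rpow' (ha : 0 ≤ a) (hab : a ≤ b) (hr0 : 0 ≤ r)
    (hrq : r ≤ q) : a ^ q * b ≤ b ^ (1 + q - r) * a ^ r := by
  have := rpow_mul_rpow_le_rpow_mul_rpow ha hab hr0 hrq zero_le_one (d := 1 + q - r) (by ring)
  rwa [rpow_one, mul_comm (a ^ r)] at this

lemma rpow_mul_self_le_rpow_one_add_sub_mul_rpow (ha : 0 ≤ a) (hab : a ≤ b) (hq : 0 ≤ q)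
    (hr0 : 0 ≤ r) (hr1 : r ≤ 1) : a ^ q * a ≤ b ^ (1 + q - r) * a ^ r :=
  (mul_le_mul_of_nonneg_right (rpow_le_rpow ha hab hq) ha).trans
    (rpow_mul_le_rpow_one_add_sub_mul_rpow ha hab hq hr0 hr1)

lemma rpow_mul_self_le_rpow_mul_rpow_one_add_sub (ha : 0 ≤ a) (hab : a ≤ b) (hr0 : 0 ≤ r)
    (hrq : r ≤ q) : a ^ q * a ≤ a ^ (1 + q - r) * b ^ r := by
  have := rpow_mul_rpow_le_rpow_mul_rpow ha hab (a := 1 + q) (c := 1 + q - r) (by linarith)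
    (by linarith) le_rfl (d := r) (by ring)
  rwa [rpow_zero, mul_one, rpow_one_add' ha (by linarith), mul_comm] at this

lemma rpow_mul_le_rpow_mul_add_rpow_mul_rpow {c : ℝ} (ha : 0 ≤ a) (hac : a ≤ c) (hb : 0 ≤ b)
    (hq : 0 ≤ q) (hr0 : 0 ≤ r) (hrq : r ≤ q) :
    a ^ q * b ≤ c ^ q * a + b ^ (1 + q - r) * a ^ r := by
  rcases le_total a b with hab | hba
  · have := rpow_mul_le_rpow_one_add_sub_mul_rpow' ha hab hr0 hrq
    have : 0 ≤ c ^ q * a := mul_nonneg (rpow_nonneg (ha.trans hac) q) ha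
    linarith
  · have := (mul_le_mul_of_nonneg_left hba (by positivity)).trans
      (mul_le_mul_of_nonneg_right (rpow_le_rpow ha hac hq) ha)
    have : 0 ≤ b ^ (1 + q - r) * a ^ r := by positivity
    linarith

end ShiftToLarger

lemma add_rpow_le_two_rpow_mul {a b p : ℝ} (ha : 0 ≤ a) (hb : 0 ≤ b) (hp : 1 ≤ p) :
    (a + b) ^ p ≤ 2 ^ (p - 1) * (a ^ p + b ^ p) := by
  lift a to NNReal using ha
  lift b to NNReal using hb
  exact_mod_cast NNReal.rpow_add_le_mul_rpow_add_rpow a b hp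

lemma sum_rpow_one_add_le {ι : Type*} (s : Finset ι) {a : ι → ℝ} {M q : ℝ}
    (ha : ∀ i ∈ s, 0 ≤ a i) (haM : ∀ i ∈ s, a i ≤ M) (hq0 : 0 < q) (hq1 : q ≤ 1) :
    (∑ i ∈ s, a i) ^ (1 + q) ≤ #s * ∑ i ∈ s, M ^ q * a i := by
  rcases s.eq_empty_or_nonempty with rfl | hs
  · simp [zero_rpow (by linarith : (1 : ℝ) + q ≠ 0)]
  have hsum : 0 ≤ ∑ i ∈ s, a i := sum_nonneg ha
  have hM : 0 ≤ M := (ha _ hs.choose_spec).trans (haM _ hs.choose_spec)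
  have hcard : (1 : ℝ) ≤ #s := by exact_mod_cast hs.card_pos
  calc (∑ i ∈ s, a i) ^ (1 + q) = (∑ i ∈ s, a i) ^ q * ∑ i ∈ s, a i := by
        rw [add_comm, rpow_add_one' hsum (by linarith)]
    _ ≤ (#s * M) ^ q * ∑ i ∈ s, a i := by
        gcongr
        simpa using sum_le_card_nsmul s a M haM
    _ = (#s : ℝ) ^ q * ∑ i ∈ s, M ^ q * a i := by
        rw [mul_rpow (by positivity) hM, ← mul_sum, mul_assoc]
    _ ≤ #s * ∑ i ∈ s, M ^ q * a i := by
        gcongr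
        · exact sum_nonneg fun i hi => mul_nonneg (rpow_nonneg hM q) (ha i hi)
        · exact rpow_le_self_of_one_le hcard hq1

lemma sum_erase_le_sum_filter_lt {ι : Type*} [Fintype ι] [LinearOrder ι] {f : ι → ι → ℝ}
    (hf : ∀ i j, f i j = f j i) (hf0 : ∀ i j, 0 ≤ f i j) (i : ι) :
    ∑ j ∈ univ.erase i, f i j ≤ ∑ p ∈ univ.filter (fun p : ι × ι => p.1 < p.2), f p.1 p.2 := by
  have hinj : Set.InjOn (fun j => (min i j, max i j)) (univ.erase i : Finset ι) := by
    intro j hj k hk hjk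
    simp only [Prod.mk.injEq] at hjk
    grind
  calc ∑ j ∈ univ.erase i, f i j
      = ∑ j ∈ univ.erase i, f (min i j) (max i j) := by
        refine sum_congr rfl fun j _ => ?_
        rcases le_total i j with hij | hji
        · rw [min_eq_left hij, max_eq_right hij]
        · rw [min_eq_right hji, max_eq_left hji, hf]
    _ = ∑ p ∈ (univ.erase i).image (fun j => (min i j, max i j)), f p.1 p.2 :=
        (sum_image (f := fun p : ι × ι => f p.1 p.2) hinj).symm
    _ ≤ ∑ p ∈ univ.filter (fun p : ι × ι => p.1 < p.2), f p.1 p.2 := by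
        refine sum_le_sum_of_subset_of_nonneg ?_ fun p _ _ => hf0 _ _
        intro p hp
        obtain ⟨j, hj, rfl⟩ := mem_image.1 hp
        simpa using ne_of_mem_erase hj

lemma abs_rpow_sub_rpow_le {a b q : ℝ} (ha : 0 ≤ a) (hb : 0 ≤ b) (hq0 : 0 ≤ q) (hq1 : q ≤ 1) :
    |a ^ q - b ^ q| ≤ |a - b| ^ q := by
  wlog hba : b ≤ a generalizing a b
  · rw [abs_sub_comm, abs_sub_comm a]
    exact this hb ha (le_of_not_ge hba)
  have hsub := rpow_add_le_add_rpow hb (sub_nonneg.2 hba) hq0 hq1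
  rw [add_sub_cancel] at hsub
  rw [abs_of_nonneg (sub_nonneg.2 (rpow_le_rpow hb hba hq0)), abs_of_nonneg (sub_nonneg.2 hba)]
  linarith

noncomputable def absRpowMul (q s : ℝ) : ℝ := |s| ^ q * s

section AbsRpowMul

variable {q : ℝ}

lemma abs_absRpowMul (q s : ℝ) : |absRpowMul q s| = |s| ^ q * |s| := by
  rw [absRpowMul, abs_mul, abs_of_nonneg (rpow_nonneg (abs_nonneg s) q)]

lemma continuous_absRpowMul (hq : 0 < q) : Continuous (absRpowMul q) := by
  unfold absRpowMul
  fun_prop (disch := positivity)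

lemma hasDerivAt_absRpowMul (hq : 0 < q) (s : ℝ) :
    HasDerivAt (absRpowMul q) ((1 + q) * |s| ^ q) s := by
  refine hasDerivAt_of_hasDerivAt_of_ne' (g := fun s => (1 + q) * |s| ^ q) (x := 0)
    (fun s hs => ?_) (continuous_absRpowMul hq).continuousAt
    (by fun_prop (disch := positivity)) s
  have hs' : |s| ≠ 0 := abs_ne_zero.2 hs
  refine (((hasDerivAt_abs hs).rpow_const (p := q) (Or.inl hs')).mul
    (hasDerivAt_id s)).congr_deriv ?_
  rw [rpow_sub_one hs', id, mul_one, mul_comm _ s, ← mul_assoc, ← mul_assoc, self_mul_sign]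
  field_simp
  ring

lemma abs_absRpowMul_sub_sub_le (hq0 : 0 < q) (hq1 : q ≤ 1) (u v : ℝ) :
    |absRpowMul q u - absRpowMul q v - (1 + q) * |v| ^ q * (u - v)|
      ≤ (1 + q) * |u - v| ^ (1 + q) := by
  have hderiv : ∀ t, HasDerivAt (fun t => absRpowMul q t - (1 + q) * |v| ^ q * t)
      ((1 + q) * |t| ^ q - (1 + q) * |v| ^ q) t := fun t =>
    (hasDerivAt_absRpowMul hq0 t).sub ((hasDerivAt_id t).const_mul _ |>.congr_deriv (mul_one _))
  have hbound : ∀ t ∈ Set.uIcc v u,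
      ‖(1 + q) * |t| ^ q - (1 + q) * |v| ^ q‖ ≤ (1 + q) * |u - v| ^ q := by
    intro t ht
    rw [norm_eq_abs, ← mul_sub, abs_mul, abs_of_pos (by linarith)]
    gcongr
    calc |(|t| ^ q - |v| ^ q)| ≤ |(|t| - |v|)| ^ q :=
          abs_rpow_sub_rpow_le (abs_nonneg t) (abs_nonneg v) hq0.le hq1
      _ ≤ |t - v| ^ q := rpow_le_rpow (abs_nonneg _) (abs_abs_sub_abs_le_abs_sub t v) hq0.le
      _ ≤ |u - v| ^ q := rpow_le_rpow (abs_nonneg _) (Set.abs_sub_left_of_mem_uIcc ht) hq0.le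
  have := (convex_uIcc v u).norm_image_sub_le_of_norm_hasDerivWithin_le
    (fun t _ => (hderiv t).hasDerivWithinAt) hbound Set.left_mem_uIcc Set.right_mem_uIcc
  rw [norm_eq_abs, norm_eq_abs] at this
  rw [rpow_one_add' (abs_nonneg _) (by linarith), mul_comm |u - v|, ← mul_assoc]
  convert this using 2
  ring

variable {ι : Type*} (s : Finset ι) {r v h : ℝ} {w : ι → ℝ}

lemma abs_one_add_mul_rpow_mul_sum_le (hq0 : 0 ≤ q) (hq1 : q ≤ 1) :
    |(1 + q) * |v| ^ q * ∑ j ∈ s, w j| ≤ 2 * ∑ j ∈ s, |v| ^ q * |w j| := by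
  rw [abs_mul, abs_mul, abs_of_pos (by linarith), abs_of_nonneg (by positivity), ← mul_sum,
    mul_assoc]
  gcongr
  · linarith
  · exact abs_sum_le_sum_abs _ _

lemma abs_absRpowMul_add_sum_sub_sub_le (hq0 : 0 < q) (hq1 : q ≤ 1)
    (hw : ∀ j ∈ s, |w j| ≤ |v|) :
    |absRpowMul q (v + ∑ j ∈ s, w j) - absRpowMul q v - (1 + q) * |v| ^ q * ∑ j ∈ s, w j|
      ≤ 2 * (#s * ∑ j ∈ s, |v| ^ q * |w j|) := by
  calc _ ≤ (1 + q) * |∑ j ∈ s, w j| ^ (1 + q) := by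
        simpa using abs_absRpowMul_sub_sub_le hq0 hq1 (v + ∑ j ∈ s, w j) v
    _ ≤ 2 * (#s * ∑ j ∈ s, |v| ^ q * |w j|) := by
        gcongr
        · linarith
        exact (rpow_le_rpow (abs_nonneg _) (abs_sum_le_sum_abs _ _) (by linarith)).trans
          (sum_rpow_one_add_le s (fun j _ => abs_nonneg (w j)) hw hq0 hq1)

lemma abs_absRpowMul_add_add_sum_sub_sub_le (hq0 : 0 < q) (hq1 : q ≤ 1) (hr0 : 0 ≤ r)
    (hrq : r ≤ q) (hw : ∀ j ∈ s, |w j| ≤ |v|) (hh : |h| ≤ |v|) :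
    |absRpowMul q (v + (h + ∑ j ∈ s, w j)) - absRpowMul q v
        - (1 + q) * |v| ^ q * (h + ∑ j ∈ s, w j)|
      ≤ 4 * (|h| ^ (1 + q - r) * |v| ^ r + #s * ∑ j ∈ s, |v| ^ q * |w j|) := by
  have hs0 : 0 ≤ ∑ j ∈ s, |w j| := sum_nonneg fun j _ => abs_nonneg _
  have hB : |h + ∑ j ∈ s, w j| ≤ |h| + ∑ j ∈ s, |w j| :=
    (abs_add_le _ _).trans (by gcongr; exact abs_sum_le_sum_abs _ _)
  have hh1q : |h| ^ (1 + q) ≤ |h| ^ (1 + q - r) * |v| ^ r := by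
    rw [rpow_one_add' (abs_nonneg _) (by linarith), mul_comm]
    exact rpow_mul_self_le_rpow_mul_rpow_one_add_sub (abs_nonneg _) hh hr0 hrq
  have hs1q := sum_rpow_one_add_le s (fun j _ => abs_nonneg (w j)) hw hq0 hq1
  calc _ ≤ (1 + q) * |h + ∑ j ∈ s, w j| ^ (1 + q) := by
        simpa using abs_absRpowMul_sub_sub_le hq0 hq1 (v + (h + ∑ j ∈ s, w j)) v
    _ ≤ 2 * (2 ^ q * (|h| ^ (1 + q) + (∑ j ∈ s, |w j|) ^ (1 + q))) := by
        gcongr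
        · linarith
        calc |h + ∑ j ∈ s, w j| ^ (1 + q) ≤ (|h| + ∑ j ∈ s, |w j|) ^ (1 + q) :=
              rpow_le_rpow (abs_nonneg _) hB (by linarith)
          _ ≤ _ := by
              simpa using add_rpow_le_two_rpow_mul (abs_nonneg h) hs0 (p := 1 + q) (by linarith)
    _ ≤ 2 * (2 * (|h| ^ (1 + q - r) * |v| ^ r + #s * ∑ j ∈ s, |v| ^ q * |w j|)) := by
        gcongr
        exact rpow_le_self_of_one_le one_le_two hq1
    _ = _ := by ring

end AbsRpowMul

section Expansion

variable {ι : Type*} [Fintype ι] {q r : ℝ}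

noncomputable def expansionError (q : ℝ) (y : ι → ℝ) (h : ℝ) : ℝ :=
  absRpowMul q (h + ∑ j, y j) - ∑ j, absRpowMul q (y j) - (1 + q) * (∑ j, |y j| ^ q) * h
    - absRpowMul q h

lemma abs_expansionError_le_of_forall_abs_le (hq0 : 0 < q) (hq1 : q ≤ 1) (hr0 : 0 ≤ r)
    (hrq : r ≤ q) (y : ι → ℝ) {h : ℝ} (hy : ∀ j, |y j| ≤ |h|) :
    |expansionError q y h|
      ≤ (2 * Fintype.card ι + 5) * (|h| ^ (1 + q - r) * ∑ j, |y j| ^ r) := by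
  set T := |h| ^ (1 + q - r) * ∑ j, |y j| ^ r with hTdef
  have hT : ∀ g : ι → ℝ, (∀ j, g j ≤ |h| ^ (1 + q - r) * |y j| ^ r) → ∑ j, g j ≤ T :=
    fun g hg => by rw [hTdef, mul_sum]; exact sum_le_sum fun j _ => hg j
  have hhy : ∑ j, |h| ^ q * |y j| ≤ T := hT _ fun j =>
    rpow_mul_le_rpow_one_add_sub_mul_rpow (abs_nonneg _) (hy j) hq0.le hr0 (hrq.trans hq1)
  have hR := abs_absRpowMul_add_sum_sub_sub_le univ hq0 hq1 (fun j _ => hy j)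
  have hA := abs_one_add_mul_rpow_mul_sum_le univ (v := h) (w := y) hq0.le hq1
  have hB : |∑ j, absRpowMul q (y j)| ≤ T :=
    (abs_sum_le_sum_abs _ _).trans <| hT _ fun j => (abs_absRpowMul q (y j)).trans_le <|
      rpow_mul_self_le_rpow_one_add_sub_mul_rpow (abs_nonneg _) (hy j) hq0.le hr0 (hrq.trans hq1)
  have hC : |(1 + q) * (∑ j, |y j| ^ q) * h| ≤ 2 * T := by
    rw [abs_mul, abs_mul, abs_of_pos (by linarith), abs_of_nonneg (by positivity), mul_assoc,
      sum_mul]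
    gcongr
    · linarith
    · exact hT _ fun j => rpow_mul_le_rpow_one_add_sub_mul_rpow' (abs_nonneg _) (hy j) hr0 hrq
  rw [card_univ] at hR
  have hcard : 0 ≤ (Fintype.card ι : ℝ) := Nat.cast_nonneg _
  calc |expansionError q y h|
      = |(absRpowMul q (h + ∑ j, y j) - absRpowMul q h - (1 + q) * |h| ^ q * ∑ j, y j)
          + (1 + q) * |h| ^ q * ∑ j, y j - ∑ j, absRpowMul q (y j)
          - (1 + q) * (∑ j, |y j| ^ q) * h| := by rw [expansionError]; ring_nf
    _ ≤ 2 * (Fintype.card ι * T) + 2 * T + T + 2 * T := by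
        have := mul_le_mul_of_nonneg_left hhy hcard
        grind [abs_add_le, abs_sub]
    _ = (2 * Fintype.card ι + 5) * T := by ring

variable [LinearOrder ι]

noncomputable def pairInteraction (q : ℝ) (y : ι → ℝ) : ℝ :=
  ∑ p ∈ univ.filter (fun p : ι × ι => p.1 < p.2),
    min (|y p.1| ^ q * |y p.2|) (|y p.2| ^ q * |y p.1|)

lemma abs_expansionError_le_of_abs_le_max (hq0 : 0 < q) (hq1 : q ≤ 1) (hr0 : 0 ≤ r)
    (hrq : r ≤ q) (y : ι → ℝ) {h : ℝ} {j₀ : ι} (hmax : ∀ j, |y j| ≤ |y j₀|)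
    (hh : |h| ≤ |y j₀|) :
    |expansionError q y h|
      ≤ (4 * Fintype.card ι + 5) * (pairInteraction q y + |h| ^ (1 + q - r) * ∑ j, |y j| ^ r) := by
  set E := univ.erase j₀
  set t : ι → ℝ := fun j => |h| ^ (1 + q - r) * |y j| ^ r
  set M := ∑ j ∈ E, |y j₀| ^ q * |y j|
  set T := ∑ j ∈ E, t j
  have hM : M ≤ pairInteraction q y := by
    refine le_of_eq_of_le (sum_congr rfl fun j _ => ?_)
      (sum_erase_le_sum_filter_lt (f := fun i j => min (|y i| ^ q * |y j|) (|y j| ^ q * |y i|))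
        (fun _ _ => min_comm _ _) (fun _ _ => by positivity) j₀)
    exact (min_rpow_mul_rpow_mul_of_le (abs_nonneg _) (hmax j) hq0.le hq1).symm
  have hR := abs_absRpowMul_add_add_sum_sub_sub_le E hq0 hq1 hr0 hrq (fun j _ => hmax j) hh
  have hA := abs_one_add_mul_rpow_mul_sum_le E (v := y j₀) (w := y) hq0.le hq1
  have hB : |∑ j ∈ E, absRpowMul q (y j)| ≤ M :=
    (abs_sum_le_sum_abs _ _).trans <| sum_le_sum fun j _ => (abs_absRpowMul q (y j)).trans_le <|
      mul_le_mul_of_nonneg_right (rpow_le_rpow (abs_nonneg _) (hmax j) hq0.le) (abs_nonneg _)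
  have hC : |(1 + q) * (∑ j ∈ E, |y j| ^ q) * h| ≤ 2 * (M + T) := by
    rw [abs_mul, abs_mul, abs_of_pos (by linarith), abs_of_nonneg (by positivity), mul_assoc,
      sum_mul, ← sum_add_distrib]
    gcongr with j
    · linarith
    · exact rpow_mul_le_rpow_mul_add_rpow_mul_rpow (abs_nonneg _) (hmax j) (abs_nonneg h) hq0.le
        hr0 hrq
  have hD : |absRpowMul q h| ≤ t j₀ := (abs_absRpowMul q h).trans_le
    (rpow_mul_self_le_rpow_mul_rpow_one_add_sub (abs_nonneg _) hh hr0 hrq)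
  have hsplit : ∀ f : ι → ℝ, ∑ j, f j = f j₀ + ∑ j ∈ E, f j :=
    fun f => (add_sum_erase _ f (mem_univ j₀)).symm
  have hT : |h| ^ (1 + q - r) * ∑ j, |y j| ^ r = t j₀ + T := by
    rw [mul_sum]
    exact hsplit t
  have hE : (#E : ℝ) ≤ Fintype.card ι := by exact_mod_cast card_le_univ E
  calc |expansionError q y h|
      = |(absRpowMul q (y j₀ + (h + ∑ j ∈ E, y j)) - absRpowMul q (y j₀)
            - (1 + q) * |y j₀| ^ q * (h + ∑ j ∈ E, y j))
          + (1 + q) * |y j₀| ^ q * ∑ j ∈ E, y j - ∑ j ∈ E, absRpowMul q (y j)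
          - (1 + q) * (∑ j ∈ E, |y j| ^ q) * h - absRpowMul q h| := by
        rw [expansionError, hsplit y, hsplit (fun j => absRpowMul q (y j)),
          hsplit (fun j => |y j| ^ q), add_left_comm]
        ring_nf
    _ ≤ 4 * (t j₀ + #E * M) + 2 * M + M + 2 * (M + T) + t j₀ := by
        grind [abs_add_le, abs_sub]
    _ ≤ (4 * Fintype.card ι + 5) * (pairInteraction q y + |h| ^ (1 + q - r) * ∑ j, |y j| ^ r) := by
        have : 0 ≤ M := by positivity
        have : 0 ≤ T := by positivity
        rw [hT]
        nlinarith [mul_le_mul_of_nonneg_right hE this, (by positivity : 0 ≤ t j₀),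
          (by positivity : (0 : ℝ) ≤ Fintype.card ι * (t j₀ + T)),
          mul_le_mul_of_nonneg_left hM (by positivity : (0 : ℝ) ≤ 4 * Fintype.card ι + 5)]

theorem abs_expansionError_le (hq0 : 0 < q) (hq1 : q ≤ 1) (hr0 : 0 ≤ r) (hrq : r ≤ q)
    (y : ι → ℝ) (h : ℝ) :
    |expansionError q y h|
      ≤ (4 * Fintype.card ι + 5) * (pairInteraction q y + |h| ^ (1 + q - r) * ∑ j, |y j| ^ r) := by
  by_cases hdom : ∀ j, |y j| ≤ |h|
  · have hP : 0 ≤ pairInteraction q y := sum_nonneg fun _ _ => by positivity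
    have hT : 0 ≤ |h| ^ (1 + q - r) * ∑ j, |y j| ^ r := by positivity
    have hcard : (0 : ℝ) ≤ Fintype.card ι := Nat.cast_nonneg _
    refine (abs_expansionError_le_of_forall_abs_le hq0 hq1 hr0 hrq y hdom).trans ?_
    nlinarith
  · obtain ⟨j, hj⟩ := not_forall.1 hdom
    obtain ⟨j₀, -, hj₀⟩ := exists_max_image univ (fun j => |y j|) ⟨j, mem_univ j⟩
    exact abs_expansionError_le_of_abs_le_max hq0 hq1 hr0 hrq y (fun j => hj₀ j (mem_univ j))
      ((not_le.1 hj).le.trans (hj₀ j (mem_univ j)))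

end Expansion

theorem pointwise_nonlinearity_expansion_general (N : ℕ) (hN : 7 ≤ N) (J : ℕ) :
    ∃ C > 0, ∀ (y : Fin J → ℝ) (h : ℝ),
      |F N (h + ∑ j, y j) - (∑ j, F N (y j))
        - ((N : ℝ) + 2) / ((N : ℝ) - 2) * (∑ j, |y j| ^ ((4 : ℝ) / ((N : ℝ) - 2))) * h
        - F N h|
      ≤ C * ((∑ p ∈ Finset.univ.filter (fun p : Fin J × Fin J => p.1 < p.2),
              min (|y p.1| ^ ((4 : ℝ) / ((N : ℝ) - 2)) * |y p.2|)
                  (|y p.2| ^ ((4 : ℝ) / ((N : ℝ) - 2)) * |y p.1|))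
          + |h| ^ (((N : ℝ) + 1) / ((N : ℝ) - 2)) *
              ∑ j, |y j| ^ ((1 : ℝ) / ((N : ℝ) - 2))) := by
  have hN2 : (5 : ℝ) ≤ N - 2 := by
    have : (7 : ℝ) ≤ N := by exact_mod_cast hN
    linarith
  have hP : ((N : ℝ) + 2) / (N - 2) = 1 + 4 / (N - 2) := by field_simp; ring
  have hE : ((N : ℝ) + 1) / (N - 2) = 1 + 4 / (N - 2) - 1 / (N - 2) := by field_simp; ring
  refine ⟨4 * J + 5, by positivity, fun y h => ?_⟩
  have key := abs_expansionError_le (q := 4 / (N - 2)) (r := 1 / (N - 2)) (by positivity)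
    ((div_le_one (by linarith)).2 (by linarith)) (by positivity) (by gcongr; norm_num) y h
  rw [Fintype.card_fin] at key
  rw [hP, hE]
  exact key

theorem pointwise_nonlinearity_expansion (N : ℕ) (hN : 7 ≤ N) (J : ℕ) (hJ : 1 ≤ J) :
    ∃ C > 0, ∀ (y : Fin J → ℝ) (h : ℝ),
      |F N (h + ∑ j, y j) - (∑ j, F N (y j))
        - ((N : ℝ) + 2) / ((N : ℝ) - 2) * (∑ j, |y j| ^ ((4 : ℝ) / ((N : ℝ) - 2))) * h
        - F N h|
      ≤ C * ((∑ p ∈ Finset.univ.filter (fun p : Fin J × Fin J => p.1 < p.2),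
              min (|y p.1| ^ ((4 : ℝ) / ((N : ℝ) - 2)) * |y p.2|)
                  (|y p.2| ^ ((4 : ℝ) / ((N : ℝ) - 2)) * |y p.1|))
          + |h| ^ (((N : ℝ) + 1) / ((N : ℝ) - 2)) *
              ∑ j, |y j| ^ ((1 : ℝ) / ((N : ℝ) - 2))) :=
  pointwise_nonlinearity_expansion_general N hN J
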